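/- For any string S, the number of front pointers of PD(S) is at most the number of zero entries in PD(S[2..]); consequently |F_{PD(S)}| ≤ σ_S. -/

import Mathlib

open List

inductive Shape where
  | nil : Shape
  | node : Shape → Shape → Shape
deriving DecidableEq

inductive BTree (α : Type*) where
  | nil : BTree α
  | node : BTree α → α → BTree α → BTree α

def BTree.shape {α : Type*} : BTree α → Shape
  | .nil => .nil
  | .node l _ r => .node l.shape r.shape

def BTree.rootVal {α : Type*} : BTree α → Option α
  | .nil => none
  | .node _ v _ => some v

section
variable {α : Type*} [LinearOrder α] [Inhabited α]

/-- Parent-distance value at 1-based position `i` of `S`. -/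
def pdVal (S : List α) (i : ℕ) : ℕ :=
  let J := (Finset.Ico 1 i).filter (fun j => S.getD (j-1) default ≤ S.getD (i-1) default)
  if h : J.Nonempty then i - J.max' h else 0

/-- Parent-distance encoding of `S` (1-based positions). -/
def PD (S : List α) : List ℕ := (List.range S.length).map (fun k => pdVal S (k+1))

/-- 0-based index of the leftmost minimum of `S`. -/
def leftmostMinIdx (S : List α) : ℕ :=
  ((List.range S.length).argmin (fun j => S.getD j default)).getD 0

def CTaux : ℕ → List α → BTree α
  | 0, _ => .nil
  | (n+1), S =>
    if S.isEmpty then .nil else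
      let i := leftmostMinIdx S
      .node (CTaux n (S.take i)) (S.getD i default) (CTaux n (S.drop (i+1)))

/-- The (labeled) Cartesian tree of `S`. -/
def CT (S : List α) : BTree α := CTaux S.length S

/-- Front pointers of a sequence `u` of naturals (1-based positions `k ≥ 2` with `k - u[k] = 1`). -/
def frontPointers (u : List ℕ) : Finset ℕ :=
  (Finset.Icc 2 u.length).filter (fun k => k - u.getD (k-1) 0 = 1)

/-- `FP(S)[i]`: number of front pointers of `PD(S[i..])` (1-based `i`). -/
def FPval (S : List α) (i : ℕ) : ℕ := (frontPointers (PD (S.drop (i-1)))).card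

/-- The FP encoding of `S`. -/
def FP (S : List α) : List ℕ := (List.range S.length).map (fun k => FPval S (k+1))

end

/-
A front pointer `k` of `PD(S)` points back to position 1, so no character strictly between
positions 1 and `k` is `≤ S[k]`. Dropping the first character, `S[k]` becomes a strict prefix
minimum of `S[2..]`, i.e. a zero of `PD(S[2..])` at position `k - 1`. Strict prefix minima carry
pairwise distinct characters, so there are at most `σ_{S[2..]} ≤ σ_S` of them.
-/

theorem List.card_filter_range_eq_count_map {β : Type*} [DecidableEq β] (f : ℕ → β) (a : β)
    (n : ℕ) : ((Finset.range n).filter (fun i => f i = a)).card = ((List.range n).map f).count a := by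
  rw [List.count, List.countP_map, List.countP_eq_length_filter, Finset.card_def,
    Finset.filter_val, Finset.range_val, ← Multiset.coe_range, Multiset.filter_coe,
    Multiset.coe_card]
  rfl

theorem List.getD_drop {β : Type*} (l : List β) (m n : ℕ) (d : β) :
    (l.drop m).getD n d = l.getD (m + n) d := by
  simp only [List.getD_eq_getElem?_getD, List.getElem?_drop]

section
variable {α : Type*} [LinearOrder α] [Inhabited α]

lemma length_PD (S : List α) : (PD S).length = S.length := by
  simp [PD]

lemma getD_PD (S : List α) {k : ℕ} (hk : 1 ≤ k) (hkS : k ≤ S.length) :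
    (PD S).getD (k - 1) 0 = pdVal S k := by
  rw [List.getD_eq_getElem _ _ (by rw [length_PD]; omega)]
  simp only [PD, List.getElem_map, List.getElem_range]
  congr 1
  omega

lemma count_zero_PD (S : List α) :
    (PD S).count 0 = ((Finset.range S.length).filter (fun i => pdVal S (i + 1) = 0)).card :=
  (List.card_filter_range_eq_count_map _ 0 _).symm

lemma mem_frontPointers_PD {S : List α} {k : ℕ} :
    k ∈ frontPointers (PD S) ↔ 2 ≤ k ∧ k ≤ S.length ∧ k - pdVal S k = 1 := by
  rw [frontPointers, Finset.mem_filter, Finset.mem_Icc, length_PD, and_assoc]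
  refine and_congr_right fun hk => and_congr_right fun hkS => ?_
  rw [getD_PD S (by omega) hkS]

lemma le_sub_pdVal {S : List α} {i j : ℕ} (hj : 1 ≤ j) (hji : j < i)
    (hle : S.getD (j - 1) default ≤ S.getD (i - 1) default) : j ≤ i - pdVal S i := by
  unfold pdVal
  set J := (Finset.Ico 1 i).filter (fun j => S.getD (j - 1) default ≤ S.getD (i - 1) default)
  have hjJ : j ∈ J := Finset.mem_filter.2 ⟨Finset.mem_Ico.2 ⟨hj, hji⟩, hle⟩
  have hne : J.Nonempty := ⟨j, hjJ⟩
  have hmax_lt : J.max' hne < i := (Finset.mem_Ico.1 (Finset.mem_filter.1 (J.max'_mem hne)).1).2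
  rw [dif_pos hne]
  have := J.le_max' j hjJ
  omega

lemma pdVal_eq_zero_iff {S : List α} {i : ℕ} :
    pdVal S i = 0 ↔ ∀ j, 1 ≤ j → j < i → S.getD (i - 1) default < S.getD (j - 1) default := by
  unfold pdVal
  set J := (Finset.Ico 1 i).filter (fun j => S.getD (j - 1) default ≤ S.getD (i - 1) default)
  have hJ : J = ∅ ↔ ∀ j, 1 ≤ j → j < i → S.getD (i - 1) default < S.getD (j - 1) default := by
    simp [J, Finset.filter_eq_empty_iff, and_imp]
  rw [← hJ, ← Finset.not_nonempty_iff_eq_empty]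
  by_cases hne : J.Nonempty
  · have := (Finset.mem_Ico.1 (Finset.mem_filter.1 (J.max'_mem hne)).1).2
    rw [dif_pos hne]
    simp only [hne, not_true_eq_false, iff_false]
    omega
  · rw [dif_neg hne]
    simp [hne]

lemma lt_of_sub_pdVal_eq_one {S : List α} {j k : ℕ} (hfront : k - pdVal S k = 1) (hj : 2 ≤ j)
    (hjk : j < k) : S.getD (k - 1) default < S.getD (j - 1) default := by
  by_contra! hle
  have := le_sub_pdVal (by omega) hjk hle
  omega

lemma pdVal_drop_one_eq_zero {S : List α} {k : ℕ} (hk : 2 ≤ k) (hfront : k - pdVal S k = 1) :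
    pdVal (S.drop 1) (k - 1) = 0 := by
  refine pdVal_eq_zero_iff.2 fun j hj hjk => ?_
  rw [List.getD_drop, List.getD_drop, show 1 + (k - 1 - 1) = k - 1 by omega,
    show 1 + (j - 1) = j + 1 - 1 by omega]
  exact lt_of_sub_pdVal_eq_one hfront (by omega) (by omega)

lemma card_frontPointers_PD_le_count_zero (S : List α) :
    (frontPointers (PD S)).card ≤ (PD (S.drop 1)).count 0 := by
  rw [count_zero_PD]
  refine Finset.card_le_card_of_injOn (· - 2) (fun k hk => ?_) (fun a ha b hb hab => ?_)
  · obtain ⟨hk, hkS, hfront⟩ := mem_frontPointers_PD.1 hk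
    simp only [Finset.coe_filter, Finset.mem_range, List.length_drop, Set.mem_ofPred_eq]
    refine ⟨by omega, ?_⟩
    rw [show k - 2 + 1 = k - 1 by omega]
    exact pdVal_drop_one_eq_zero hk hfront
  · have ha2 := (mem_frontPointers_PD.1 ha).1
    have hb2 := (mem_frontPointers_PD.1 hb).1
    simp only at hab
    omega

lemma count_zero_PD_le_card_toFinset (S : List α) : (PD S).count 0 ≤ S.toFinset.card := by
  rw [count_zero_PD]
  refine Finset.card_le_card_of_injOn (fun i => S.getD i default) (fun i hi => ?_)
    (fun a ha b hb hab => ?_)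
  · simp only [Finset.coe_filter, Finset.mem_range, Set.mem_ofPred_eq, Finset.mem_coe,
      List.mem_toFinset] at hi ⊢
    rw [List.getD_eq_getElem _ _ hi.1]
    exact List.getElem_mem hi.1
  · simp only [Finset.coe_filter, Finset.mem_range, Set.mem_ofPred_eq, pdVal_eq_zero_iff,
      add_tsub_cancel_right] at ha hb hab
    by_contra hne
    rcases lt_or_gt_of_ne hne with hlt | hlt
    · exact (hb.2 (a + 1) (by omega) (by omega)).ne (by simpa using hab.symm)
    · exact (ha.2 (b + 1) (by omega) (by omega)).ne (by simpa using hab)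

end

/-- The number of front pointers of `PD(S)` is at most the number of zeros of
`PD(S[2..])`, and consequently at most the number of distinct characters of `S`. -/
theorem stmt10 {α : Type*} [LinearOrder α] [Inhabited α] (S : List α) :
    (frontPointers (PD S)).card ≤ (PD (S.drop 1)).count 0 ∧
    (frontPointers (PD S)).card ≤ S.toFinset.card := by
  have hzeros := card_frontPointers_PD_le_count_zero S
  refine ⟨hzeros, hzeros.trans ((count_zero_PD_le_card_toFinset _).trans ?_)⟩
  exact Finset.card_le_card fun x hx =>
    List.mem_toFinset.2 (List.drop_subset 1 S (List.mem_toFinset.1 hx))
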